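/- arXiv:2602.16185 — 2 statements merged into one kernel-verified Lean document; each statement's English description precedes it below -/
import Mathlib

section
/- Let n ≥ 1 and let p(z) = ∑_{k=0}^{n} a_k z^k be a polynomial with complex coefficients a_k = α_k + β_k i (α_k, β_k real) satisfying α_n ≥ α_{n−1} ≥ ⋯ ≥ α_1 ≥ α_0 ≥ 0 and α_n > 0. Then p(z) ≠ 0 for every complex z with |z| > 1 + (2/α_n) · ∑_{k=0}^{n} |β_k|. -/
/-!
Multiplying by `z - 1` turns `p(z) = 0` into
`a_n z^(n+1) = a_0 + ∑ (a_(k+1) - a_k) z^(k+1)`; for `|z| ≥ 1` this gives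
`|a_n| |z| ≤ |a_0| + ∑ |a_(k+1) - a_k|`. Monotonicity of the real parts makes the real parts of
the differences telescope to `α_n - α_0`, while each imaginary part `β_k` enters at most twice,
so the right-hand side is at most `α_n + 2 ∑ |β_k|`.
-/

open Finset

theorem sub_one_mul_sum_range_mul_pow {R : Type*} [CommRing R] (a : ℕ → R) (z : R) (n : ℕ) :
    (z - 1) * ∑ k ∈ range (n + 1), a k * z ^ k =
      a n * z ^ (n + 1) - a 0 - ∑ k ∈ range n, (a (k + 1) - a k) * z ^ (k + 1) := by
  induction n with
  | zero => simp only [zero_add, range_one, sum_singleton, range_zero, sum_empty]; ring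
  | succ n ih => rw [sum_range_succ, mul_add, ih, sum_range_succ]; ring

theorem norm_add_sum_mul_pow_succ_le {𝕜 : Type*} [NormedField 𝕜] {z : 𝕜} (hz : 1 ≤ ‖z‖)
    (c : 𝕜) (d : ℕ → 𝕜) (n : ℕ) :
    ‖c + ∑ k ∈ range n, d k * z ^ (k + 1)‖ ≤ (‖c‖ + ∑ k ∈ range n, ‖d k‖) * ‖z‖ ^ n := by
  rw [add_mul, sum_mul]
  refine (norm_add_le _ _).trans (add_le_add ?_ ?_)
  · exact le_mul_of_one_le_right (norm_nonneg _) (one_le_pow₀ hz)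
  · refine (norm_sum_le _ _).trans (sum_le_sum fun k hk => ?_)
    rw [norm_mul, norm_pow]
    exact mul_le_mul_of_nonneg_left (pow_le_pow_right₀ hz (mem_range.mp hk)) (norm_nonneg _)

theorem norm_mul_norm_le_of_sum_range_mul_pow_eq_zero {𝕜 : Type*} [NormedField 𝕜]
    {a : ℕ → 𝕜} {z : 𝕜} {n : ℕ} (hz : 1 ≤ ‖z‖)
    (hp : ∑ k ∈ range (n + 1), a k * z ^ k = 0) :
    ‖a n‖ * ‖z‖ ≤ ‖a 0‖ + ∑ k ∈ range n, ‖a (k + 1) - a k‖ := by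
  have hlead : a n * z ^ (n + 1) = a 0 + ∑ k ∈ range n, (a (k + 1) - a k) * z ^ (k + 1) := by
    have := sub_one_mul_sum_range_mul_pow a z n
    rw [hp, mul_zero] at this
    linear_combination -this
  have hbound : ‖a n‖ * ‖z‖ * ‖z‖ ^ n ≤ (‖a 0‖ + ∑ k ∈ range n, ‖a (k + 1) - a k‖) * ‖z‖ ^ n :=
    calc ‖a n‖ * ‖z‖ * ‖z‖ ^ n = ‖a n * z ^ (n + 1)‖ := by rw [norm_mul, norm_pow]; ring
      _ ≤ _ := hlead ▸ norm_add_sum_mul_pow_succ_le hz _ _ n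
  exact le_of_mul_le_mul_right hbound (pow_pos (one_pos.trans_le hz) n)

theorem Complex.norm_sub_le_of_re_le {v w : ℂ} (h : w.re ≤ v.re) :
    ‖v - w‖ ≤ v.re - w.re + (|v.im| + |w.im|) :=
  calc ‖v - w‖ ≤ |(v - w).re| + |(v - w).im| := Complex.norm_le_abs_re_add_abs_im _
    _ ≤ v.re - w.re + (|v.im| + |w.im|) := by
      rw [sub_re, sub_im, abs_of_nonneg (sub_nonneg.mpr h)]
      exact add_le_add_right (abs_sub _ _) _

theorem Complex.norm_add_sum_norm_sub_le_of_re_monotone {a : ℕ → ℂ} {n : ℕ}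
    (h0 : 0 ≤ (a 0).re) (hmono : ∀ k < n, (a k).re ≤ (a (k + 1)).re) :
    ‖a 0‖ + ∑ k ∈ range n, ‖a (k + 1) - a k‖ ≤
      (a n).re + 2 * ∑ k ∈ range (n + 1), |(a k).im| := by
  have sharp : ∀ m ≤ n, ‖a 0‖ + ∑ k ∈ range m, ‖a (k + 1) - a k‖ ≤
      (a m).re + ∑ k ∈ range (m + 1), |(a k).im| + ∑ k ∈ range m, |(a k).im| := by
    intro m hm
    induction m with
    | zero => simpa [abs_of_nonneg h0] using Complex.norm_le_abs_re_add_abs_im (a 0)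
    | succ m ih =>
      have ih := ih (by omega)
      simp only [sum_range_succ] at ih ⊢
      linarith [Complex.norm_sub_le_of_re_le (hmono m (by omega))]
  have hsub : ∑ k ∈ range n, |(a k).im| ≤ ∑ k ∈ range (n + 1), |(a k).im| :=
    sum_le_sum_of_subset_of_nonneg (range_subset_range.mpr n.le_succ)
      fun _ _ _ => abs_nonneg _
  linarith [sharp n le_rfl]

theorem govil_rahman_real_parts_general (n : ℕ) (a : ℕ → ℂ)
    (h0 : 0 ≤ (a 0).re)
    (hmono : ∀ k < n, (a k).re ≤ (a (k + 1)).re)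
    (hpos : 0 < (a n).re)
    (z : ℂ)
    (hz : 1 + 2 / (a n).re * ∑ k ∈ Finset.range (n + 1), |(a k).im| < ‖z‖) :
    ∑ k ∈ Finset.range (n + 1), a k * z ^ k ≠ 0 := by
  intro hp
  set B := ∑ k ∈ range (n + 1), |(a k).im|
  have hB : 0 ≤ 2 / (a n).re * B :=
    mul_nonneg (div_nonneg zero_le_two hpos.le) (sum_nonneg fun _ _ => abs_nonneg _)
  have hbound : (a n).re * ‖z‖ ≤ (a n).re + 2 * B :=
    calc (a n).re * ‖z‖ ≤ ‖a n‖ * ‖z‖ :=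
          mul_le_mul_of_nonneg_right (Complex.re_le_norm _) (norm_nonneg _)
      _ ≤ ‖a 0‖ + ∑ k ∈ range n, ‖a (k + 1) - a k‖ :=
          norm_mul_norm_le_of_sum_range_mul_pow_eq_zero (by linarith) hp
      _ ≤ (a n).re + 2 * B := Complex.norm_add_sum_norm_sub_le_of_re_monotone h0 hmono
  have hexpand : (a n).re * (1 + 2 / (a n).re * B) = (a n).re + 2 * B := by
    field_simp
  linarith [mul_lt_mul_of_pos_left hz hpos]

/-- Theorem 1.3: a complex polynomial whose coefficients have nonnegative, nondecreasing
real parts (with positive leading real part) does not vanish outside the stated disk. -/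
theorem govil_rahman_real_parts (n : ℕ) (hn : 1 ≤ n) (a : ℕ → ℂ)
    (h0 : 0 ≤ (a 0).re)
    (hmono : ∀ k < n, (a k).re ≤ (a (k + 1)).re)
    (hpos : 0 < (a n).re)
    (z : ℂ)
    (hz : 1 + 2 / (a n).re * ∑ k ∈ Finset.range (n + 1), |(a k).im| < ‖z‖) :
    ∑ k ∈ Finset.range (n + 1), a k * z ^ k ≠ 0 :=
  govil_rahman_real_parts_general n a h0 hmono hpos z hz
end

section
/- Let n ≥ 1 and let a_0, …, a_n ∈ ℍ, where a_k has real part a_{k,0} = Re(a_k) and imaginary components a_{k,1}, a_{k,2}, a_{k,3} (so a_k = a_{k,0} + a_{k,1} i + a_{k,2} j + a_{k,3} k). Assume 0 ≤ a_{0,0} ≤ a_{1,0} ≤ ⋯ ≤ a_{n,0} and a_{n,0} ≠ 0. Define p(q) = ∑_{k=0}^{n} q^k · a_k for q ∈ ℍ. Then every quaternion q with p(q) = 0 satisfies ‖q‖ ≤ 1 + (2/a_{n,0}) · ∑_{k=0}^{n} ∑_{ℓ=1}^{3} |a_{k,ℓ}|. -/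
/-!
Multiplying `p(q) = 0` on the left by `q - 1` gives
`q^(n+1) a_n = a_0 + ∑_{k<n} q^(k+1) (a_(k+1) - a_k)`. For `‖q‖ > 1` taking norms and
dividing by `‖q‖^n` yields `‖q‖ ‖a_n‖ ≤ ‖a_0‖ + ∑ ‖a_(k+1) - a_k‖`. Bounding each norm by the
absolute value of the real part plus the `ℓ¹`-norm of the imaginary part, the real parts
telescope to `Re a_n` by monotonicity, and every imaginary part is counted at most twice.
-/

open Finset

theorem sub_one_mul_sum_range_pow_mul {R : Type*} [Ring R] (q : R) (a : ℕ → R) (n : ℕ) :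
    (q - 1) * ∑ k ∈ range (n + 1), q ^ k * a k =
      q ^ (n + 1) * a n - a 0 - ∑ k ∈ range n, q ^ (k + 1) * (a (k + 1) - a k) := by
  induction n with
  | zero => simp [sub_mul]
  | succ n ih =>
    rw [sum_range_succ, mul_add, ih, sum_range_succ]
    simp only [mul_sub, sub_mul, ← mul_assoc, ← pow_succ', one_mul]
    abel

theorem norm_mul_norm_le_of_sum_range_pow_mul_eq_zero {R : Type*} [NormedDivisionRing R]
    {q : R} (hq : 1 ≤ ‖q‖) {a : ℕ → R} {n : ℕ}
    (hroot : ∑ k ∈ range (n + 1), q ^ k * a k = 0) :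
    ‖q‖ * ‖a n‖ ≤ ‖a 0‖ + ∑ k ∈ range n, ‖a (k + 1) - a k‖ := by
  have hidentity :
      q ^ (n + 1) * a n = a 0 + ∑ k ∈ range n, q ^ (k + 1) * (a (k + 1) - a k) := by
    have := sub_one_mul_sum_range_pow_mul q a n
    rwa [hroot, mul_zero, sub_sub, eq_comm, sub_eq_zero] at this
  have hbound : ‖q‖ ^ n * (‖q‖ * ‖a n‖) ≤
      ‖q‖ ^ n * (‖a 0‖ + ∑ k ∈ range n, ‖a (k + 1) - a k‖) :=
    calc ‖q‖ ^ n * (‖q‖ * ‖a n‖) = ‖q ^ (n + 1) * a n‖ := by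
          rw [norm_mul, norm_pow, pow_succ, mul_assoc]
      _ ≤ ‖a 0‖ + ∑ k ∈ range n, ‖q‖ ^ (k + 1) * ‖a (k + 1) - a k‖ := by
          rw [hidentity]
          refine (norm_add_le _ _).trans (add_le_add_right ((norm_sum_le _ _).trans_eq ?_) _)
          simp only [norm_mul, norm_pow]
      _ ≤ ‖q‖ ^ n * ‖a 0‖ + ∑ k ∈ range n, ‖q‖ ^ n * ‖a (k + 1) - a k‖ := by
          gcongr with k hk
          · exact le_mul_of_one_le_left (norm_nonneg _) (one_le_pow₀ hq)
          · exact mem_range.1 hk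
      _ = ‖q‖ ^ n * (‖a 0‖ + ∑ k ∈ range n, ‖a (k + 1) - a k‖) := by
          rw [mul_add, mul_sum]
  exact le_of_mul_le_mul_left hbound (pow_pos (zero_lt_one.trans_le hq) n)

namespace Quaternion

def imL1Norm (x : ℍ[ℝ]) : ℝ := |x.imI| + |x.imJ| + |x.imK|

theorem imL1Norm_nonneg (x : ℍ[ℝ]) : 0 ≤ imL1Norm x := by
  unfold imL1Norm
  positivity

theorem imL1Norm_sub_le (x y : ℍ[ℝ]) : imL1Norm (x - y) ≤ imL1Norm x + imL1Norm y := by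
  simp only [imL1Norm, imI_sub, imJ_sub, imK_sub]
  linarith [abs_sub x.imI y.imI, abs_sub x.imJ y.imJ, abs_sub x.imK y.imK]

theorem norm_mul_self_eq_sq_add_sq (x : ℍ[ℝ]) :
    ‖x‖ * ‖x‖ = x.re ^ 2 + x.imI ^ 2 + x.imJ ^ 2 + x.imK ^ 2 := by
  rw [← normSq_eq_norm_mul_self, normSq_def']

theorem re_le_norm (x : ℍ[ℝ]) : x.re ≤ ‖x‖ := by
  nlinarith [norm_mul_self_eq_sq_add_sq x, norm_nonneg x, sq_nonneg x.imI, sq_nonneg x.imJ,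
    sq_nonneg x.imK]

theorem norm_le_abs_re_add_imL1Norm (x : ℍ[ℝ]) : ‖x‖ ≤ |x.re| + imL1Norm x := by
  have hsq : ‖x‖ ^ 2 ≤ (|x.re| + imL1Norm x) ^ 2 := by
    simp only [imL1Norm]
    nlinarith [norm_mul_self_eq_sq_add_sq x, sq_abs x.re, sq_abs x.imI, sq_abs x.imJ,
      sq_abs x.imK, abs_nonneg x.re, abs_nonneg x.imI, abs_nonneg x.imJ, abs_nonneg x.imK]
  exact le_of_pow_le_pow_left₀ two_ne_zero (add_nonneg (abs_nonneg _) (imL1Norm_nonneg x)) hsq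

theorem norm_add_sum_norm_sub_le {a : ℕ → ℍ[ℝ]} {n : ℕ} (h0 : 0 ≤ (a 0).re)
    (hmono : ∀ k < n, (a k).re ≤ (a (k + 1)).re) :
    ‖a 0‖ + ∑ k ∈ range n, ‖a (k + 1) - a k‖ ≤
      (a n).re + 2 * ∑ k ∈ range (n + 1), imL1Norm (a k) := by
  have hfirst : ‖a 0‖ ≤ (a 0).re + imL1Norm (a 0) := by
    simpa [abs_of_nonneg h0] using norm_le_abs_re_add_imL1Norm (a 0)
  have hstep : ∀ k ∈ range n, ‖a (k + 1) - a k‖ ≤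
      ((a (k + 1)).re - (a k).re) + (imL1Norm (a (k + 1)) + imL1Norm (a k)) := by
    intro k hk
    have hre : |(a (k + 1) - a k).re| = (a (k + 1)).re - (a k).re := by
      rw [re_sub, abs_of_nonneg (sub_nonneg.2 (hmono k (mem_range.1 hk)))]
    calc ‖a (k + 1) - a k‖ ≤ |(a (k + 1) - a k).re| + imL1Norm (a (k + 1) - a k) :=
          norm_le_abs_re_add_imL1Norm _
      _ ≤ _ := by rw [hre]; gcongr; exact imL1Norm_sub_le _ _
  have hshift := sum_range_succ' (fun k => imL1Norm (a k)) n
  have hlast := sum_range_succ (fun k => imL1Norm (a k)) n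
  calc ‖a 0‖ + ∑ k ∈ range n, ‖a (k + 1) - a k‖
      ≤ (a 0).re + imL1Norm (a 0) + ∑ k ∈ range n,
          (((a (k + 1)).re - (a k).re) + (imL1Norm (a (k + 1)) + imL1Norm (a k))) :=
        add_le_add hfirst (sum_le_sum hstep)
    _ = (a n).re + ∑ k ∈ range (n + 1), imL1Norm (a k) + ∑ k ∈ range n, imL1Norm (a k) := by
        rw [sum_add_distrib, sum_add_distrib, sum_range_sub (fun k => (a k).re), hshift]
        ring
    _ ≤ _ := by linarith [imL1Norm_nonneg (a n)]

end Quaternion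

theorem enestrom_kakeya_quaternion_real_parts_general (n : ℕ)
    (a : ℕ → Quaternion ℝ)
    (h0 : 0 ≤ (a 0).re)
    (hmono : ∀ k < n, (a k).re ≤ (a (k + 1)).re)
    (hne : (a n).re ≠ 0)
    (q : Quaternion ℝ)
    (hq : ∑ k ∈ Finset.range (n + 1), q ^ k * a k = 0) :
    ‖q‖ ≤ 1 + 2 / (a n).re *
      ∑ k ∈ Finset.range (n + 1), (|(a k).imI| + |(a k).imJ| + |(a k).imK|) := by
  change ‖q‖ ≤ 1 + 2 / (a n).re * ∑ k ∈ range (n + 1), Quaternion.imL1Norm (a k)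
  have hre : 0 < (a n).re := by
    have htelescope := sum_range_sub (fun k => (a k).re) n
    have hincr := sum_nonneg fun k hk => sub_nonneg.2 (hmono k (mem_range.1 hk))
    exact lt_of_le_of_ne (by linarith) hne.symm
  rcases le_or_gt ‖q‖ 1 with hq1 | hq1
  · have : 0 ≤ 2 / (a n).re * ∑ k ∈ range (n + 1), Quaternion.imL1Norm (a k) :=
      mul_nonneg (by positivity) (sum_nonneg fun k _ => Quaternion.imL1Norm_nonneg (a k))
    linarith
  have hbound := calc
    ‖q‖ * (a n).re ≤ ‖q‖ * ‖a n‖ := by gcongr; exact Quaternion.re_le_norm _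
    _ ≤ ‖a 0‖ + ∑ k ∈ range n, ‖a (k + 1) - a k‖ :=
      norm_mul_norm_le_of_sum_range_pow_mul_eq_zero hq1.le hq
    _ ≤ (a n).re + 2 * ∑ k ∈ range (n + 1), Quaternion.imL1Norm (a k) :=
      Quaternion.norm_add_sum_norm_sub_le h0 hmono
  calc ‖q‖ ≤ ((a n).re + 2 * ∑ k ∈ range (n + 1), Quaternion.imL1Norm (a k)) / (a n).re :=
        (le_div_iff₀ hre).2 hbound
    _ = _ := by field_simp

/-- Theorem 3.10 (quaternionic instance): if the real parts of the coefficients are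
nonnegative and nondecreasing with `(a n).re ≠ 0`, then all zeros of `p(q) = ∑ q^k a_k`
lie in the stated ball. -/
theorem enestrom_kakeya_quaternion_real_parts (n : ℕ) (hn : 1 ≤ n)
    (a : ℕ → Quaternion ℝ)
    (h0 : 0 ≤ (a 0).re)
    (hmono : ∀ k < n, (a k).re ≤ (a (k + 1)).re)
    (hne : (a n).re ≠ 0)
    (q : Quaternion ℝ)
    (hq : ∑ k ∈ Finset.range (n + 1), q ^ k * a k = 0) :
    ‖q‖ ≤ 1 + 2 / (a n).re *
      ∑ k ∈ Finset.range (n + 1), (|(a k).imI| + |(a k).imJ| + |(a k).imK|) :=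
  enestrom_kakeya_quaternion_real_parts_general n a h0 hmono hne q hq
end
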